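/- arXiv:2402.01066 — 2 statements merged into one kernel-verified Lean document; each statement's English description precedes it below -/
import Mathlib

section
/- Let G be an Eulerian digraph in which every node has in-degree 2 and out-degree 2, let P be the 0/1-circulation polytope of G, let 0 ∈ P be the zero flow, and let 1 ∈ P be the full flow. If ((g_1,λ_1),(g_2,λ_2)) is a sign-compatible circuit decomposition of 1 − 0 of length 2, then both step lengths are maximal, i.e., ((g_1,λ_1),(g_2,λ_2)) is a circuit walk from 0 to 1. -/
open Matrix

/-- `g` is a circuit of the polyhedron `{x : A x = b, B x ≤ d}` with respect to the
description `(A, B)`: a nonzero element of `ker A` with coprime integral components such that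
`B g` is support-minimal among `{B x : x ∈ ker A, x ≠ 0}`. -/
def IsCircuit {mA mB n : Type*} [Fintype n]
    (A : Matrix mA n ℝ) (B : Matrix mB n ℝ) (g : n → ℝ) : Prop :=
  A.mulVec g = 0 ∧ g ≠ 0 ∧
  (∃ z : n → ℤ, (∀ i, (z i : ℝ) = g i) ∧ Finset.univ.gcd z = 1) ∧
  ∀ x : n → ℝ, A.mulVec x = 0 → x ≠ 0 →
    ¬ (Function.support (B.mulVec x) ⊂ Function.support (B.mulVec g))

/-- Membership in the polyhedron `{x : A x = b, B x ≤ d}`. -/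
def InPoly {mA mB n : Type*} [Fintype n] (A : Matrix mA n ℝ) (b : mA → ℝ)
    (B : Matrix mB n ℝ) (d : mB → ℝ) (x : n → ℝ) : Prop :=
  A.mulVec x = b ∧ B.mulVec x ≤ d

/-- `((g 0, lam 0), …, (g (r-1), lam (r-1)))` is a (maximal) circuit walk from `x` to `y`
in the polyhedron `{x : A x = b, B x ≤ d}`. -/
def IsCircuitWalk {mA mB n : Type*} [Fintype n]
    (A : Matrix mA n ℝ) (b : mA → ℝ) (B : Matrix mB n ℝ) (d : mB → ℝ)
    (x y : n → ℝ) (r : ℕ) (g : Fin r → n → ℝ) (lam : Fin r → ℝ) : Prop :=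
  (∀ i, IsCircuit A B (g i)) ∧
  (∀ i, 0 < lam i) ∧
  (∀ k : Fin r, InPoly A b B d (x + ∑ i ∈ Finset.univ.filter (fun i => i ≤ k), lam i • g i)) ∧
  (x + ∑ i, lam i • g i = y) ∧
  (∀ k : Fin r, ∀ mu : ℝ, lam k < mu →
    ¬ InPoly A b B d ((x + ∑ i ∈ Finset.univ.filter (fun i => i < k), lam i • g i) + mu • g k))

/-- `u` and `u'` are sign-compatible with respect to `B`. -/
def SignCompat {mB n : Type*} [Fintype n] (B : Matrix mB n ℝ) (u u' : n → ℝ) : Prop :=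
  ∀ i, 0 ≤ B.mulVec u i * B.mulVec u' i

/-- Sign-compatible circuit decomposition of the vector `u` with respect to `(A, B)`. -/
def IsSCDecomp {mA mB n : Type*} [Fintype n]
    (A : Matrix mA n ℝ) (B : Matrix mB n ℝ) (u : n → ℝ)
    (r : ℕ) (g : Fin r → n → ℝ) (lam : Fin r → ℝ) : Prop :=
  (∀ i, IsCircuit A B (g i)) ∧ (∀ i, 0 < lam i) ∧ (∑ i, lam i • g i = u) ∧
  ∀ i j, SignCompat B (g i) (g j)

/-- A loopless digraph with node type `N` and arc type `α`. -/
structure Digraph' (N α : Type*) where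
  src : α → N
  dst : α → N
  loopless : ∀ a, src a ≠ dst a

/-- The node-arc incidence matrix of a digraph. -/
def incMat {N α : Type*} [DecidableEq N] (G : Digraph' N α) : Matrix N α ℝ :=
  Matrix.of fun v a => if G.src a = v then 1 else if G.dst a = v then -1 else 0

/-- The inequality system `x ≤ 1`-style box constraints: rows of the identity followed by
rows of the negative identity. -/
def boxB (α : Type*) [DecidableEq α] : Matrix (α ⊕ α) α ℝ :=
  Matrix.fromRows 1 (-1)

/-- Right-hand side for the box constraints `x ≤ 1`, `-x ≤ 0` of the 0/1-circulation polytope. -/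
def boxd (α : Type*) : α ⊕ α → ℝ := Sum.elim (fun _ => 1) (fun _ => 0)

/-- In-degree of a node. -/
def inDeg {N α : Type*} [Fintype α] [DecidableEq N] (G : Digraph' N α) (v : N) : ℕ :=
  (Finset.univ.filter fun a => G.dst a = v).card

/-- Out-degree of a node. -/
def outDeg {N α : Type*} [Fintype α] [DecidableEq N] (G : Digraph' N α) (v : N) : ℕ :=
  (Finset.univ.filter fun a => G.src a = v).card

/-- `S` is the arc set of a simple dicycle of `G` (a directed cycle with no repeated nodes). -/
def IsSimpleDicycle {N α : Type*} (G : Digraph' N α) (S : Set α) : Prop :=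
  ∃ (k : ℕ) (e : Fin (k+1) → α) (v : Fin (k+1) → N),
    Function.Injective e ∧ Function.Injective v ∧ S = Set.range e ∧
    ∀ i, G.src (e i) = v i ∧ G.dst (e i) = v (i + 1)

/-- `S` is the arc set of a simple Hamiltonian dicycle of `G`. -/
def IsHamiltonianDicycle {N α : Type*} (G : Digraph' N α) (S : Set α) : Prop :=
  ∃ (k : ℕ) (e : Fin (k+1) → α) (v : Fin (k+1) → N),
    Function.Injective e ∧ Function.Bijective v ∧ S = Set.range e ∧
    ∀ i, G.src (e i) = v i ∧ G.dst (e i) = v (i + 1)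

/-- `G` decomposes into two simple Hamiltonian dicycles. -/
def DecompTwoHamiltonian {N α : Type*} (G : Digraph' N α) : Prop :=
  ∃ S₁ S₂ : Set α, IsHamiltonianDicycle G S₁ ∧ IsHamiltonianDicycle G S₂ ∧
    Disjoint S₁ S₂ ∧ S₁ ∪ S₂ = Set.univ

/-!
Sign-compatibility with respect to the box rows forces both circuits to be nonnegative, so
`λ₀ g₀` already lies in the cube. Following one out-arc from every node eventually closes a
dicycle, and as there are twice as many arcs as nodes its circulation misses some arc; by
support-minimality no circuit is then supported on all arcs. So each `gᵢ` vanishes on an arc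
where the other step alone must reach `1`, and lengthening that step leaves the cube.
-/

theorem isCircuitWalk_two_iff {mA mB n : Type*} [Fintype n]
    (A : Matrix mA n ℝ) (b : mA → ℝ) (B : Matrix mB n ℝ) (d : mB → ℝ)
    (x y : n → ℝ) (g : Fin 2 → n → ℝ) (lam : Fin 2 → ℝ) :
    IsCircuitWalk A b B d x y 2 g lam ↔
      (∀ i, IsCircuit A B (g i)) ∧ (∀ i, 0 < lam i) ∧
      InPoly A b B d (x + lam 0 • g 0) ∧ InPoly A b B d y ∧
      x + lam 0 • g 0 + lam 1 • g 1 = y ∧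
      (∀ mu, lam 0 < mu → ¬ InPoly A b B d (x + mu • g 0)) ∧
      (∀ mu, lam 1 < mu → ¬ InPoly A b B d (x + lam 0 • g 0 + mu • g 1)) := by
  have hle0 : Finset.univ.filter (fun i : Fin 2 => i ≤ 0) = {0} := by decide
  have hle1 : Finset.univ.filter (fun i : Fin 2 => i ≤ 1) = Finset.univ := by decide
  have hlt0 : Finset.univ.filter (fun i : Fin 2 => i < 0) = ∅ := by decide
  have hlt1 : Finset.univ.filter (fun i : Fin 2 => i < 1) = {0} := by decide
  simp only [IsCircuitWalk, Fin.forall_fin_two, hle0, hle1, hlt0, hlt1, Finset.sum_singleton,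
    Finset.sum_empty, add_zero, Fin.sum_univ_two, ← add_assoc]
  constructor
  · rintro ⟨hc, hp, ⟨h0, h1⟩, hy, hm⟩
    exact ⟨hc, hp, h0, hy ▸ h1, hy, hm⟩
  · rintro ⟨hc, hp, h0, h1, hy, hm⟩
    exact ⟨hc, hp, ⟨h0, hy ▸ h1⟩, hy, hm⟩

section Box

variable {m α : Type*} [Fintype α] [DecidableEq α] {A : Matrix m α ℝ}

theorem boxB_mulVec (u : α → ℝ) : boxB α *ᵥ u = Sum.elim u (-u) := by
  rw [boxB, fromRows_mulVec, one_mulVec, neg_mulVec, one_mulVec]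

theorem inPoly_boxB_iff (x : α → ℝ) :
    InPoly A 0 (boxB α) (boxd α) x ↔ A *ᵥ x = 0 ∧ ∀ a, 0 ≤ x a ∧ x a ≤ 1 := by
  simp only [InPoly, boxB_mulVec, Pi.le_def, Sum.forall, Sum.elim_inl, Sum.elim_inr, boxd,
    Pi.neg_apply, neg_nonpos, forall_and]
  tauto

theorem SignCompat.mul_nonneg {u v : α → ℝ} (h : SignCompat (boxB α) u v) (a : α) :
    0 ≤ u a * v a := by
  simpa [boxB_mulVec] using h (Sum.inl a)

theorem support_boxB_mulVec_eq_univ_iff (u : α → ℝ) :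
    Function.support (boxB α *ᵥ u) = Set.univ ↔ ∀ a, u a ≠ 0 := by
  simp [boxB_mulVec, Set.eq_univ_iff_forall, Sum.forall]

theorem IsCircuit.exists_apply_eq_zero {g x : α → ℝ}
    (hg : IsCircuit A (boxB α) g) (hx : A *ᵥ x = 0) (hx0 : x ≠ 0) {a : α} (hxa : x a = 0) :
    ∃ b, g b = 0 := by
  by_contra! hg0
  refine hg.2.2.2 x hx hx0 ?_
  rw [(support_boxB_mulVec_eq_univ_iff g).2 hg0, Set.ssubset_univ_iff, Ne,
    support_boxB_mulVec_eq_univ_iff]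
  exact fun h => h a hxa

theorem IsSCDecomp.boxB_nonneg {u : α → ℝ} {r : ℕ} {g : Fin r → α → ℝ} {lam : Fin r → ℝ}
    (h : IsSCDecomp A (boxB α) u r g lam) {a : α} (ha : 0 < u a) (i : Fin r) : 0 ≤ g i a := by
  obtain ⟨-, hpos, hsum, hcompat⟩ := h
  by_contra! hneg
  have hle : ∀ j, lam j * g j a ≤ 0 := fun j =>
    mul_nonpos_of_nonneg_of_nonpos (hpos j).le
      (nonpos_of_mul_nonneg_right ((hcompat i j).mul_nonneg a) hneg)
  have hua : u a = ∑ j, lam j * g j a := by simp [← hsum, Finset.sum_apply]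
  exact (hua ▸ ha).not_ge (Finset.sum_nonpos fun j _ => hle j)

theorem isCircuitWalk_zero_one_of_nonneg {g : Fin 2 → α → ℝ} {lam : Fin 2 → ℝ}
    (hcirc : ∀ i, IsCircuit A (boxB α) (g i)) (hpos : ∀ i, 0 < lam i)
    (hsum : lam 0 • g 0 + lam 1 • g 1 = 1) (hnonneg : ∀ i a, 0 ≤ g i a)
    (hzero : ∀ i, ∃ a, g i a = 0) :
    IsCircuitWalk A 0 (boxB α) (boxd α) 0 1 2 g lam := by
  have hsum_apply a : lam 0 * g 0 a + lam 1 * g 1 a = 1 := by simpa using congrFun hsum a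
  have hker i : A *ᵥ g i = 0 := (hcirc i).1
  have hker_one : A *ᵥ 1 = 0 := by simp [← hsum, mulVec_add, mulVec_smul, hker]
  obtain ⟨a₀, ha₀⟩ := hzero 1
  obtain ⟨a₁, ha₁⟩ := hzero 0
  simp only [isCircuitWalk_two_iff, inPoly_boxB_iff, zero_add, mulVec_add, mulVec_smul, hker,
    smul_zero, add_zero, hsum, hker_one, Pi.add_apply, Pi.smul_apply, smul_eq_mul, Pi.one_apply,
    true_and, le_refl, zero_le_one, and_self, implies_true]
  refine ⟨hcirc, hpos, fun a => ⟨?_, ?_⟩, ?_, ?_⟩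
  · exact mul_nonneg (hpos 0).le (hnonneg 0 a)
  · nlinarith [hsum_apply a, hpos 1, hnonneg 1 a]
  · intro mu hmu hle
    have hstep : lam 0 * g 0 a₀ = 1 := by simpa [ha₀] using hsum_apply a₀
    have hg : 0 < g 0 a₀ := pos_of_mul_pos_right (hstep ▸ one_pos) (hpos 0).le
    linarith [(hle a₀).2, mul_lt_mul_of_pos_right hmu hg]
  · intro mu hmu hle
    have hstep : lam 1 * g 1 a₁ = 1 := by simpa [ha₁] using hsum_apply a₁
    have hg : 0 < g 1 a₁ := pos_of_mul_pos_right (hstep ▸ one_pos) (hpos 1).le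
    have := (hle a₁).2
    rw [ha₁, mul_zero, zero_add] at this
    linarith [mul_lt_mul_of_pos_right hmu hg]

end Box

section Digraph

variable {N α : Type*} [DecidableEq N] (G : Digraph' N α)

theorem incMat_mulVec_single [Fintype α] [DecidableEq α] (a : α) :
    incMat G *ᵥ Pi.single a 1 = Pi.single (G.src a) 1 - Pi.single (G.dst a) 1 := by
  ext v
  have hloop := G.loopless a
  by_cases hs : G.src a = v <;> by_cases hd : G.dst a = v <;>
    simp_all [incMat, mulVec_single, Pi.single_apply, eq_comm]

theorem incMat_mulVec_sum_single_of_closedWalk [Fintype α] [DecidableEq α]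
    (v : ℕ → N) (e : ℕ → α) (hsrc : ∀ k, G.src (e k) = v k) (hdst : ∀ k, G.dst (e k) = v (k + 1))
    {i j : ℕ} (hij : i ≤ j) (hv : v i = v j) :
    incMat G *ᵥ ∑ k ∈ Finset.Ico i j, Pi.single (e k) 1 = 0 := by
  simp only [mulVec_sum, incMat_mulVec_single, hsrc, hdst]
  simpa only [hv, sub_self, neg_sub_neg] using
    Finset.sum_Ico_sub (fun k => -(Pi.single (v k) 1 : N → ℝ)) hij

theorem card_eq_sum_outDeg [Fintype N] [Fintype α] : Fintype.card α = ∑ v, outDeg G v :=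
  Finset.card_eq_sum_card_fiberwise fun a _ => Finset.mem_univ (G.src a)

theorem exists_circulation_apply_eq_zero [Fintype N] [Fintype α] [DecidableEq α] [Nonempty N]
    (hout : ∀ v, 0 < outDeg G v) (hcard : Fintype.card N < Fintype.card α) :
    ∃ x : α → ℝ, incMat G *ᵥ x = 0 ∧ x ≠ 0 ∧ ∃ a, x a = 0 := by
  choose f hf using fun v => Finset.card_pos.1 (hout v)
  simp only [Finset.mem_filter, Finset.mem_univ, true_and] at hf
  set v : ℕ → N := fun k => (G.dst ∘ f)^[k] (Classical.arbitrary N)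
  have hstep : ∀ k, G.dst (f (v k)) = v (k + 1) := fun k =>
    (Function.iterate_succ_apply' (G.dst ∘ f) k _).symm
  obtain ⟨i, j, hij, hv⟩ : ∃ i j, i < j ∧ v i = v j := by
    obtain ⟨i, j, hne, hv⟩ := Finite.exists_ne_map_eq_of_infinite v
    rcases hne.lt_or_gt with h | h
    exacts [⟨i, j, h, hv⟩, ⟨j, i, h, hv.symm⟩]
  obtain ⟨a, ha⟩ : ∃ a, a ∉ Set.range f := by
    by_contra! h
    exact hcard.not_ge (Fintype.card_le_of_surjective f fun a => h a)
  refine ⟨∑ k ∈ Finset.Ico i j, Pi.single (f (v k)) 1,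
    incMat_mulVec_sum_single_of_closedWalk G v (f ∘ v) (fun k => hf _) hstep hij.le hv,
    fun h0 => ?_, a, ?_⟩
  · have hpos : 0 < ∑ k ∈ Finset.Ico i j, (Pi.single (f (v k)) (1 : ℝ) : α → ℝ) (f (v i)) :=
      Finset.sum_pos' (fun k _ => by simp [Pi.single_apply, apply_ite])
        ⟨i, Finset.mem_Ico.2 ⟨le_rfl, hij⟩, by simp⟩
    simp [← Finset.sum_apply, h0] at hpos
  · simp only [Finset.sum_apply]
    exact Finset.sum_eq_zero fun k _ => Pi.single_eq_of_ne (fun h => ha ⟨_, h.symm⟩) _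

end Digraph

/-- For an Eulerian digraph `G` in which every node has in-degree `2` and
out-degree `2`, any sign-compatible circuit decomposition of `1 - 0` of length `2` in the
0/1-circulation polytope of `G` has maximal step lengths, i.e. it is a circuit walk from the
zero flow `0` to the full flow `1`. -/
theorem sc_decomp_length_two_is_circuit_walk
    {N α : Type*} [Fintype N] [Fintype α] [DecidableEq N] [DecidableEq α] [Nonempty N]
    (G : Digraph' N α)
    (hdeg : ∀ v : N, inDeg G v = 2 ∧ outDeg G v = 2)
    (g : Fin 2 → α → ℝ) (lam : Fin 2 → ℝ)
    (hsc : IsSCDecomp (incMat G) (boxB α) ((1 : α → ℝ) - (0 : α → ℝ)) 2 g lam) :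
    IsCircuitWalk (incMat G) 0 (boxB α) (boxd α) (0 : α → ℝ) (1 : α → ℝ) 2 g lam := by
  have hcard : Fintype.card N < Fintype.card α := by
    simp only [card_eq_sum_outDeg G, fun v => (hdeg v).2, Finset.sum_const, Finset.card_univ,
      smul_eq_mul]
    linarith [Fintype.card_pos (α := N)]
  obtain ⟨x, hx, hx0, a, hxa⟩ :=
    exists_circulation_apply_eq_zero G (fun v => by simp [(hdeg v).2]) hcard
  refine isCircuitWalk_zero_one_of_nonneg hsc.1 hsc.2.1 ?_ ?_ ?_
  · simpa [Fin.sum_univ_two] using hsc.2.2.1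
  · exact fun i a => hsc.boxB_nonneg (by simp) i
  · exact fun i => (hsc.1 i).exists_apply_eq_zero hx hx0 hxa
end

section
/- Let G = (N,A) be a loopless digraph in which every node has equal in-degree and out-degree, let m = |A|, let P be the 0/1-circulation polytope of G, let 0 ∈ P be the zero flow and 1 ∈ P the full flow. If there exists a list ((g_1,λ_1),…,(g_k,λ_k)) that is simultaneously a circuit walk from 0 to 1 in P and a sign-compatible circuit decomposition of 1 − 0, then G contains a directed cycle with at least m/k arcs. -/
open Matrix

/-!
Sign-compatibility with a decomposition of the all-ones flow forces every circuit `g i` to be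
nonnegative. A nonnegative nonzero circulation carries a simple dicycle inside its support, and
the indicator of that dicycle is again a circulation, so support-minimality of the circuit makes
the support of `g i` exactly this dicycle. The supports of the `k` circuits cover all `m` arcs,
hence one of them has at least `m / k` arcs.
-/

open Function

section Incidence

variable {N α : Type*} [DecidableEq N] (G : Digraph' N α)

lemma incMat_apply_eq_sub (v : N) (a : α) :
    incMat G v a = (if G.src a = v then 1 else 0) - (if G.dst a = v then 1 else 0) := by
  by_cases hs : G.src a = v
  · have hd : G.dst a ≠ v := fun hd => G.loopless a (hs.trans hd.symm)
    simp [incMat, hs, hd]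
  · by_cases hd : G.dst a = v <;> simp [incMat, hs, hd]

variable [Fintype α]

lemma incMat_mulVec_apply (x : α → ℝ) (v : N) :
    (incMat G *ᵥ x) v =
      ∑ a ∈ Finset.univ.filter (fun a => G.src a = v), x a -
        ∑ a ∈ Finset.univ.filter (fun a => G.dst a = v), x a := by
  simp only [mulVec, dotProduct, incMat_apply_eq_sub, sub_mul, ite_mul, one_mul, zero_mul,
    Finset.sum_sub_distrib, Finset.sum_ite, Finset.sum_const_zero, add_zero]

lemma exists_src_eq_dst_pos_of_incMat_mulVec_eq_zero {x : α → ℝ} (hx : 0 ≤ x)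
    (hker : incMat G *ᵥ x = 0) {a : α} (ha : 0 < x a) :
    ∃ a', G.src a' = G.dst a ∧ 0 < x a' := by
  have hbal := congrFun hker (G.dst a)
  rw [incMat_mulVec_apply, Pi.zero_apply, sub_eq_zero] at hbal
  have hin : 0 < ∑ a' ∈ Finset.univ.filter (fun a' => G.dst a' = G.dst a), x a' :=
    ha.trans_le (Finset.single_le_sum (fun b _ => hx b) (by simp))
  obtain ⟨a', ha', hpos⟩ := Finset.exists_lt_of_sum_lt (f := 0) (g := x)
    (s := Finset.univ.filter (fun a' => G.src a' = G.dst a)) (by simpa [hbal] using hin)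
  exact ⟨a', (Finset.mem_filter.mp ha').2, hpos⟩

end Incidence

section Box

variable {α : Type*} [DecidableEq α] [Fintype α]

@[simp]
lemma boxB_mulVec_inl (x : α → ℝ) (a : α) : (boxB α *ᵥ x) (Sum.inl a) = x a := by
  simp [boxB, fromRows_mulVec]

@[simp]
lemma boxB_mulVec_inr (x : α → ℝ) (a : α) : (boxB α *ᵥ x) (Sum.inr a) = -x a := by
  simp [boxB, fromRows_mulVec, neg_mulVec]

lemma support_boxB_mulVec (x : α → ℝ) :
    support (boxB α *ᵥ x) = Sum.elim id id ⁻¹' support x := by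
  ext (a | a) <;> simp

lemma support_boxB_mulVec_ssubset_iff {x y : α → ℝ} :
    support (boxB α *ᵥ x) ⊂ support (boxB α *ᵥ y) ↔ support x ⊂ support y := by
  have hsurj : Surjective (Sum.elim id id : α ⊕ α → α) := fun a => ⟨Sum.inl a, rfl⟩
  simp only [support_boxB_mulVec, ssubset_iff_subset_not_subset,
    hsurj.preimage_subset_preimage_iff]

variable {mA : Type*} {A : Matrix mA α ℝ}

lemma IsCircuit.support_eq_of_support_subset {g y : α → ℝ} (hg : IsCircuit A (boxB α) g)
    (hy : A *ᵥ y = 0) (hy0 : y ≠ 0) (hsub : support y ⊆ support g) :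
    support y = support g :=
  hsub.eq_of_not_ssubset (support_boxB_mulVec_ssubset_iff.not.mp (hg.2.2.2 y hy hy0))

lemma IsSCDecomp.nonneg {u : α → ℝ} {r : ℕ} {g : Fin r → α → ℝ} {lam : Fin r → ℝ}
    (h : IsSCDecomp A (boxB α) u r g lam) (hu : ∀ a, 0 < u a) (i : Fin r) : 0 ≤ g i := by
  obtain ⟨-, hlam, hsum, hcompat⟩ := h
  intro a
  obtain ⟨j, hj⟩ : ∃ j, 0 < g j a := by
    by_contra! hle
    have : u a ≤ 0 := by
      rw [← hsum, Finset.sum_apply]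
      exact Finset.sum_nonpos fun j _ => smul_nonpos_of_nonneg_of_nonpos (hlam j).le (hle j)
    linarith [hu a]
  have hij := hcompat i j (Sum.inl a)
  rw [boxB_mulVec_inl, boxB_mulVec_inl] at hij
  exact nonneg_of_mul_nonneg_left hij hj

end Box

section Dicycle

variable {N α : Type*} (G : Digraph' N α)

lemma isSimpleDicycle_range_of_walk {f : ℕ → α} (hf : ∀ n, G.src (f (n + 1)) = G.dst (f n))
    (k : ℕ) (hclose : G.src (f (k + 1)) = G.src (f 0))
    (hinj : Set.InjOn (G.src ∘ f) (Set.Iio (k + 1))) :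
    IsSimpleDicycle G (Set.range fun i : Fin (k + 1) => f i) := by
  have hv : Injective fun i : Fin (k + 1) => G.src (f i) :=
    fun i j h => Fin.ext (hinj i.2 j.2 h)
  refine ⟨k, fun i => f i, fun i => G.src (f i), fun i j h => hv (congrArg G.src h), hv, rfl,
    fun i => ⟨rfl, ?_⟩⟩
  show G.dst (f i) = G.src (f ((i + 1 : Fin (k + 1)) : ℕ))
  rw [← hf, Fin.val_add_one]
  split_ifs with hi
  · simp [hi, hclose]
  · rfl

lemma exists_isSimpleDicycle_subset_of_forall_exists_src_eq_dst [Finite α] {T : Set α}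
    (hT : T.Nonempty) (hsucc : ∀ a ∈ T, ∃ a' ∈ T, G.src a' = G.dst a) :
    ∃ S, IsSimpleDicycle G S ∧ S ⊆ T := by
  classical
  choose! next hnextT hnext using hsucc
  obtain ⟨a₀, ha₀⟩ := hT
  set f : ℕ → α := fun n => next^[n] a₀
  have hfT : ∀ n, f n ∈ T := fun n => Set.MapsTo.iterate hnextT n ha₀
  have hf : ∀ n, G.src (f (n + 1)) = G.dst (f n) := fun n => by
    simp only [f, iterate_succ_apply']
    exact hnext _ (hfT n)
  have hrep : ∃ q, ∃ p < q, G.src (f p) = G.src (f q) := by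
    obtain ⟨i, j, hij, hfij⟩ := Finite.exists_ne_map_eq_of_infinite f
    rcases hij.lt_or_gt with h | h
    exacts [⟨j, i, h, congrArg G.src hfij⟩, ⟨i, j, h, congrArg G.src hfij.symm⟩]
  -- The first return of the walk to a node it has already left closes a simple dicycle.
  obtain ⟨p, hpq, hclose⟩ := Nat.find_spec hrep
  have hinj : Set.InjOn (G.src ∘ f) (Set.Iio (Nat.find hrep)) := by
    intro i hi j hj h
    by_contra hne
    rcases lt_or_gt_of_ne hne with h' | h'
    · exact Nat.find_min hrep hj ⟨i, h', h⟩
    · exact Nat.find_min hrep hi ⟨j, h', h.symm⟩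
  obtain ⟨k, hk⟩ : ∃ k, Nat.find hrep = p + (k + 1) := ⟨Nat.find hrep - p - 1, by omega⟩
  rw [hk] at hinj hclose
  refine ⟨_, isSimpleDicycle_range_of_walk G (f := fun n => f (p + n)) (fun n => hf (p + n)) k
    ?_ ?_, ?_⟩
  · simpa using hclose.symm
  · intro i hi j hj h
    simp only [Set.mem_Iio] at hi hj
    have := hinj (Set.mem_Iio.mpr (by omega)) (Set.mem_Iio.mpr (by omega)) h
    omega
  · rintro _ ⟨i, rfl⟩
    exact hfT _

variable [DecidableEq N] [Fintype α]

lemma exists_isSimpleDicycle_subset_support {x : α → ℝ} (hx : 0 ≤ x)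
    (hker : incMat G *ᵥ x = 0) (hne : x ≠ 0) :
    ∃ S, IsSimpleDicycle G S ∧ S ⊆ support x := by
  refine exists_isSimpleDicycle_subset_of_forall_exists_src_eq_dst G
    (support_nonempty_iff.mpr hne) fun a ha => ?_
  obtain ⟨a', hsrc, hpos⟩ :=
    exists_src_eq_dst_pos_of_incMat_mulVec_eq_zero G hx hker ((hx a).lt_of_ne' ha)
  exact ⟨a', hpos.ne', hsrc⟩

variable {G}

lemma IsSimpleDicycle.incMat_mulVec_indicator_eq_zero {S : Set α} (hS : IsSimpleDicycle G S) :
    incMat G *ᵥ S.indicator 1 = 0 := by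
  classical
  obtain ⟨k, e, w, he, -, rfl, hew⟩ := hS
  funext v
  have hsum : (incMat G *ᵥ (Set.range e).indicator 1) v = ∑ i, incMat G v (e i) := by
    simp only [mulVec, dotProduct, Set.indicator_apply, Pi.one_apply, mul_ite, mul_one, mul_zero]
    rw [← Finset.sum_filter, Set.filter_mem_univ_eq_toFinset, Set.toFinset_range,
      Finset.sum_image he.injOn]
  rw [hsum, Pi.zero_apply]
  simp only [incMat_apply_eq_sub, (hew _).1, (hew _).2, Finset.sum_sub_distrib, sub_eq_zero]
  exact (Fintype.sum_equiv (Equiv.addRight 1) _ _ fun _ => rfl).symm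

lemma IsSimpleDicycle.eq_support_of_isCircuit [DecidableEq α] {S : Set α} {g : α → ℝ}
    (hS : IsSimpleDicycle G S) (hg : IsCircuit (incMat G) (boxB α) g) (hSg : S ⊆ support g) :
    S = support g := by
  have hsupp : support (S.indicator (1 : α → ℝ)) = S := by simp
  have hne : S.indicator (1 : α → ℝ) ≠ 0 := by
    obtain ⟨k, e, -, -, -, rfl, -⟩ := hS
    rw [← support_nonempty_iff, hsupp]
    exact Set.range_nonempty _
  rw [← hsupp] at hSg ⊢
  exact hg.support_eq_of_support_subset hS.incMat_mulVec_indicator_eq_zero hne hSg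

end Dicycle

lemma exists_mem_support_of_sum_smul_eq {ι α : Type*} [Fintype ι] {g : ι → α → ℝ}
    {lam : ι → ℝ} {u : α → ℝ} (hsum : ∑ i, lam i • g i = u) {a : α} (ha : u a ≠ 0) :
    ∃ i, a ∈ support (g i) := by
  rw [← hsum, Finset.sum_apply] at ha
  simp only [Pi.smul_apply] at ha
  obtain ⟨i, -, hi⟩ := Finset.exists_ne_zero_of_sum_ne_zero ha
  exact ⟨i, right_ne_zero_of_smul hi⟩

lemma exists_card_div_le_ncard_of_forall_exists_mem {ι α : Type*} [Fintype ι] [Fintype α]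
    [Nonempty α] {s : ι → Set α} (hs : ∀ a, ∃ i, a ∈ s i) :
    ∃ i, (Fintype.card α : ℝ) / Fintype.card ι ≤ (s i).ncard := by
  classical
  have : Nonempty ι := (hs (Classical.arbitrary α)).nonempty
  have hcover : Fintype.card α ≤ ∑ i, (s i).ncard := by
    calc Fintype.card α = (Finset.univ.biUnion fun i => (s i).toFinset).card := by
          rw [← Finset.card_univ]
          congr 1
          exact (Finset.eq_univ_of_forall fun a => by simpa using hs a).symm
      _ ≤ ∑ i, (s i).toFinset.card := Finset.card_biUnion_le
      _ = ∑ i, (s i).ncard := by simp only [Set.ncard_eq_toFinset_card']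
  obtain ⟨i, -, hi⟩ := Finset.exists_le_of_sum_le Finset.univ_nonempty
    (f := fun _ => (Fintype.card α : ℝ) / Fintype.card ι) (g := fun i => ((s i).ncard : ℝ)) (by
      rw [Finset.sum_const, Finset.card_univ, nsmul_eq_mul, mul_div_cancel₀ _ (by positivity)]
      exact_mod_cast hcover)
  exact ⟨i, hi⟩

theorem scm_walk_gives_long_cycle_general
    {N α : Type*} [Fintype α] [DecidableEq N] [DecidableEq α] [Nonempty α]
    (G : Digraph' N α)
    (k : ℕ) (g : Fin k → α → ℝ) (lam : Fin k → ℝ)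
    (hsc : IsSCDecomp (incMat G) (boxB α) ((1 : α → ℝ) - (0 : α → ℝ)) k g lam) :
    ∃ S : Set α, IsSimpleDicycle G S ∧ (Fintype.card α : ℝ) / (k : ℝ) ≤ (S.ncard : ℝ) := by
  have hone : ∀ a, 0 < ((1 : α → ℝ) - 0) a := fun _ => by simp
  have hnonneg := hsc.nonneg hone
  obtain ⟨hcirc, -, hsum, -⟩ := hsc
  obtain ⟨i, hi⟩ := exists_card_div_le_ncard_of_forall_exists_mem fun a =>
    exists_mem_support_of_sum_smul_eq hsum (hone a).ne'
  rw [Fintype.card_fin] at hi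
  obtain ⟨S, hS, hSg⟩ :=
    exists_isSimpleDicycle_subset_support G (hnonneg i) (hcirc i).1 (hcirc i).2.1
  exact ⟨S, hS, hS.eq_support_of_isCircuit (hcirc i) hSg ▸ hi⟩

/-- Let `G` be a loopless Eulerian digraph with `m` arcs.  If there is a
list `((g₁,λ₁),…,(g_k,λ_k))` that is simultaneously a circuit walk from the zero flow to the
full flow of the 0/1-circulation polytope of `G` and a sign-compatible circuit decomposition
of `1 − 0`, then `G` contains a directed cycle with at least `m / k` arcs. -/
theorem scm_walk_gives_long_cycle
    {N α : Type*} [Fintype N] [Fintype α] [DecidableEq N] [DecidableEq α] [Nonempty α]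
    (G : Digraph' N α)
    (heul : ∀ v : N, inDeg G v = outDeg G v)
    (k : ℕ) (g : Fin k → α → ℝ) (lam : Fin k → ℝ)
    (hwalk : IsCircuitWalk (incMat G) 0 (boxB α) (boxd α) (0 : α → ℝ) (1 : α → ℝ) k g lam)
    (hsc : IsSCDecomp (incMat G) (boxB α) ((1 : α → ℝ) - (0 : α → ℝ)) k g lam) :
    ∃ S : Set α, IsSimpleDicycle G S ∧ (Fintype.card α : ℝ) / (k : ℝ) ≤ (S.ncard : ℝ) :=
  scm_walk_gives_long_cycle_general G k g lam hsc
end
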